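/- arXiv:1407.6050 — 4 statements merged into one kernel-verified Lean document; each statement's English description precedes it below -/
import Mathlib

section
/- Let n ≥ 1 and let L : ℝⁿ × ℝⁿ × ℝⁿ → ℝ be a smooth function of arguments (x, u, u̇). Then L satisfies L(x, λu, λ²u̇ + μu) = λ·L(x, u, u̇) for all λ > 0, μ ∈ ℝ and all (x, u, u̇) (the condition that the variational functional ∫ L dt is parameter-independent) if and only if the Zermelo conditions hold: (ζ₁L)(x,u,u̇) := u·(∂L/∂u) + 2u̇·(∂L/∂u̇) = L and (ζ₂L)(x,u,u̇) := u·(∂L/∂u̇) = 0 everywhere. -/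
open Real

section Aux

variable {n : ℕ} {L : (Fin n → ℝ) × (Fin n → ℝ) × (Fin n → ℝ) → ℝ}

/-- Derivative of the λ-curve. -/
lemma aux_curve (hL : ContDiff ℝ (⊤ : ℕ∞) L) (x u v c : Fin n → ℝ) (t : ℝ) :
    HasDerivAt (fun s : ℝ => L (x, s • u, s ^ 2 • v + c))
      (fderiv ℝ L (x, t • u, t ^ 2 • v + c) (0, u, (2 * t) • v)) t := by
  have hx : HasDerivAt (fun _ : ℝ => x) (0 : Fin n → ℝ) t := hasDerivAt_const t x
  have hu : HasDerivAt (fun s : ℝ => s • u) u t := by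
    simpa using (hasDerivAt_id t).smul_const u
  have hv : HasDerivAt (fun s : ℝ => s ^ 2 • v + c) ((2 * t) • v) t := by
    have := ((hasDerivAt_pow 2 t).smul_const v).add_const c
    simpa [mul_comm] using this
  have hc : HasDerivAt (fun s : ℝ =>
      ((x, s • u, s ^ 2 • v + c) : (Fin n → ℝ) × (Fin n → ℝ) × (Fin n → ℝ)))
      ((0, u, (2 * t) • v)) t := hx.prodMk (hu.prodMk hv)
  exact ((hL.differentiable (by simp) _).hasFDerivAt).comp_hasDerivAt t hc

/-- Derivative of the μ-curve. -/
lemma aux_mucurve (hL : ContDiff ℝ (⊤ : ℕ∞) L) (x a b w : Fin n → ℝ) (t : ℝ) :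
    HasDerivAt (fun s : ℝ => L (x, a, b + s • w))
      (fderiv ℝ L (x, a, b + t • w) (0, 0, w)) t := by
  have hx : HasDerivAt (fun _ : ℝ => x) (0 : Fin n → ℝ) t := hasDerivAt_const t x
  have ha : HasDerivAt (fun _ : ℝ => a) (0 : Fin n → ℝ) t := hasDerivAt_const t a
  have hv : HasDerivAt (fun s : ℝ => b + s • w) w t := by
    simpa using ((hasDerivAt_id t).smul_const w).const_add b
  have hc : HasDerivAt (fun s : ℝ =>
      ((x, a, b + s • w) : (Fin n → ℝ) × (Fin n → ℝ) × (Fin n → ℝ)))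
      ((0, 0, w)) t := hx.prodMk (ha.prodMk hv)
  exact ((hL.differentiable (by simp) _).hasFDerivAt).comp_hasDerivAt t hc

end Aux

/-- A smooth Lagrangian `L(x, u, u̇)` on `T²ℝⁿ` constitutes a
parameter-independent variational problem, i.e. `L (x, λu, λ²u̇ + μu) = λ L (x, u, u̇)`
for all `λ > 0`, `μ ∈ ℝ`, iff the Zermelo conditions `ζ₁L = L`, `ζ₂L = 0` hold, where
`ζ₁ = uⁱ∂/∂uⁱ + 2u̇ⁱ∂/∂u̇ⁱ` and `ζ₂ = uⁱ∂/∂u̇ⁱ`. -/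
theorem stmt_1 (n : ℕ) (hn : 1 ≤ n)
    (L : (Fin n → ℝ) × (Fin n → ℝ) × (Fin n → ℝ) → ℝ)
    (hL : ContDiff ℝ (⊤ : ℕ∞) L) :
    (∀ (lam mu : ℝ), 0 < lam → ∀ x u v : Fin n → ℝ,
        L (x, lam • u, lam ^ 2 • v + mu • u) = lam * L (x, u, v)) ↔
    (∀ x u v : Fin n → ℝ,
        fderiv ℝ L (x, u, v) (0, u, 2 • v) = L (x, u, v) ∧
        fderiv ℝ L (x, u, v) (0, 0, u) = 0) := by
  constructor
  · intro h x u v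
    constructor
    · -- ζ₁ condition
      have h1 := aux_curve hL x u v 0 1
      have hev : (fun s : ℝ => L (x, s • u, s ^ 2 • v + 0)) =ᶠ[nhds 1]
          (fun s : ℝ => s * L (x, u, v)) := by
        filter_upwards [eventually_gt_nhds (zero_lt_one : (0:ℝ) < 1)] with s hs
        have := h s 0 hs x u v
        simpa using this
      have h2 : HasDerivAt (fun s : ℝ => s * L (x, u, v)) (L (x, u, v)) 1 := by
        simpa using (hasDerivAt_id (1:ℝ)).mul_const (L (x, u, v))
      have := (h1.congr_of_eventuallyEq hev.symm).unique h2
      have h3 : ((2:ℕ) • v : Fin n → ℝ) = (2 * (1:ℝ)) • v := by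
        rw [← Nat.cast_smul_eq_nsmul ℝ]; norm_num
      rw [h3]
      simpa using this
    · -- ζ₂ condition
      have h1 := aux_mucurve hL x u v u 0
      have hconst : (fun s : ℝ => L (x, u, v + s • u)) = fun _ => L (x, u, v) := by
        funext s
        have := h 1 s one_pos x u v
        simpa using this
      have h2 : HasDerivAt (fun s : ℝ => L (x, u, v + s • u)) 0 0 := by
        rw [hconst]; exact hasDerivAt_const 0 _
      have := h1.unique h2
      simpa using this
  · intro h lam mu hlam x u v
    -- μ-invariance
    have hmu : ∀ a b : Fin n → ℝ, ∀ s : ℝ, L (x, a, b + s • a) = L (x, a, b) := by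
      intro a b s
      have hd : ∀ t : ℝ, HasDerivAt (fun s : ℝ => L (x, a, b + s • a)) 0 t := by
        intro t
        have := aux_mucurve hL x a b a t
        rwa [(h x a (b + t • a)).2] at this
      have hc := is_const_of_deriv_eq_zero (f := fun s : ℝ => L (x, a, b + s • a))
        (fun t => (hd t).differentiableAt) (fun t => (hd t).deriv) s 0
      simpa using hc
    -- scaling invariance via exponential substitution
    have hG : ∀ t : ℝ, HasDerivAt
        (fun t : ℝ => Real.exp (-t) * L (x, Real.exp t • u, Real.exp t ^ 2 • v)) 0 t := by
      intro t
      have hE : HasDerivAt (fun t : ℝ => Real.exp t) (Real.exp t) t := Real.hasDerivAt_exp t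
      have hinner : HasDerivAt (fun t : ℝ => L (x, Real.exp t • u, Real.exp t ^ 2 • v))
          (L (x, Real.exp t • u, Real.exp t ^ 2 • v)) t := by
        have hcomp := (aux_curve hL x u v 0 (Real.exp t)).comp t hE
        have hsm : (Real.exp t) • ((0, u, (2 * Real.exp t) • v) :
            (Fin n → ℝ) × (Fin n → ℝ) × (Fin n → ℝ)) =
            (0, Real.exp t • u, 2 • (Real.exp t ^ 2 • v)) := by
          simp only [Prod.smul_mk, smul_zero, Prod.mk.injEq]
          refine ⟨trivial, trivial, ?_⟩
          rw [smul_smul, ← Nat.cast_smul_eq_nsmul ℝ, smul_smul]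
          ring_nf
        have hkey := (h x (Real.exp t • u) (Real.exp t ^ 2 • v)).1
        have hlin : fderiv ℝ L (x, Real.exp t • u, Real.exp t ^ 2 • v + 0)
              (0, u, (2 * Real.exp t) • v) * Real.exp t
            = L (x, Real.exp t • u, Real.exp t ^ 2 • v) := by
          rw [add_zero]
          calc fderiv ℝ L (x, Real.exp t • u, Real.exp t ^ 2 • v)
                (0, u, (2 * Real.exp t) • v) * Real.exp t
              = fderiv ℝ L (x, Real.exp t • u, Real.exp t ^ 2 • v)
                (Real.exp t • (0, u, (2 * Real.exp t) • v)) := by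
                rw [map_smul, smul_eq_mul, mul_comm]
            _ = fderiv ℝ L (x, Real.exp t • u, Real.exp t ^ 2 • v)
                (0, Real.exp t • u, 2 • (Real.exp t ^ 2 • v)) := by rw [hsm]
            _ = L (x, Real.exp t • u, Real.exp t ^ 2 • v) := hkey
        rw [hlin] at hcomp
        simpa [Function.comp_def] using hcomp
      have hEneg : HasDerivAt (fun t : ℝ => Real.exp (-t)) (-Real.exp (-t)) t := by
        simpa [Function.comp_def] using (Real.hasDerivAt_exp (-t)).comp t (hasDerivAt_neg t)
      have := hEneg.mul hinner
      simpa [Pi.mul_def] using this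
    have hGconst := is_const_of_deriv_eq_zero
      (f := fun t : ℝ => Real.exp (-t) * L (x, Real.exp t • u, Real.exp t ^ 2 • v))
      (fun t => (hG t).differentiableAt) (fun t => (hG t).deriv) (Real.log lam) 0
    rw [Real.exp_log hlam] at hGconst
    simp only [neg_zero, Real.exp_zero, one_mul, one_smul, one_pow] at hGconst
    have hscale : L (x, lam • u, lam ^ 2 • v) = lam * L (x, u, v) := by
      rw [Real.exp_neg, Real.exp_log hlam] at hGconst
      field_simp at hGconst
      linarith [hGconst]
    calc L (x, lam • u, lam ^ 2 • v + mu • u)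
        = L (x, lam • u, lam ^ 2 • v + (mu / lam) • (lam • u)) := by
          rw [smul_smul, div_mul_cancel₀ _ (ne_of_gt hlam)]
      _ = L (x, lam • u, lam ^ 2 • v) := hmu (lam • u) (lam ^ 2 • v) (mu / lam)
      _ = lam * L (x, u, v) := hscale
end

section
/- Let n ≥ 1, let L : ℝⁿ × ℝⁿ × ℝⁿ → ℝ be a smooth second-order Lagrangian with arguments (x, u, u̇), and let x : ℝ → ℝⁿ be a smooth curve satisfying the Euler–Poisson equation (d/dt)p(t) = (∂L/∂x)(j²x(t)) for all t, where j²x(t) = (x(t), x'(t), x''(t)), p⁽¹⁾(t) = (∂L/∂u̇)(j²x(t)) and p(t) = (∂L/∂u)(j²x(t)) − (d/dt)p⁽¹⁾(t). Then the Hamilton function H(t) = p⁽¹⁾(t)·x''(t) + p(t)·x'(t) − L(j²x(t)) is constant in t. -/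
noncomputable section

/-- The second jet `j²x(t) = (x(t), x'(t), x''(t))` of a curve. -/
def jet2 {n : ℕ} (x : ℝ → Fin n → ℝ) (t : ℝ) :
    (Fin n → ℝ) × (Fin n → ℝ) × (Fin n → ℝ) :=
  (x t, deriv x t, deriv (deriv x) t)

/-- The higher generalized momentum `p⁽¹⁾(t) = (∂L/∂u̇)(j²x(t))`, as a covector. -/
def mom1 {n : ℕ} (L : (Fin n → ℝ) × (Fin n → ℝ) × (Fin n → ℝ) → ℝ)
    (x : ℝ → Fin n → ℝ) (t : ℝ) : (Fin n → ℝ) →L[ℝ] ℝ :=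
  fderiv ℝ (fun v => L (x t, deriv x t, v)) (deriv (deriv x) t)

/-- The generalized momentum `p(t) = (∂L/∂u)(j²x(t)) − (d/dt)p⁽¹⁾(t)`, as a covector. -/
def mom0 {n : ℕ} (L : (Fin n → ℝ) × (Fin n → ℝ) × (Fin n → ℝ) → ℝ)
    (x : ℝ → Fin n → ℝ) (t : ℝ) : (Fin n → ℝ) →L[ℝ] ℝ :=
  fderiv ℝ (fun u => L (x t, u, deriv (deriv x) t)) (deriv x t) - deriv (mom1 L x) t

/-- The Hamilton function `H = p⁽¹⁾·u̇ + p·u − L` along the curve. -/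
def hamilton {n : ℕ} (L : (Fin n → ℝ) × (Fin n → ℝ) × (Fin n → ℝ) → ℝ)
    (x : ℝ → Fin n → ℝ) (t : ℝ) : ℝ :=
  mom1 L x t (deriv (deriv x) t) + mom0 L x t (deriv x t) - L (jet2 x t)

/-- The action of the fundamental field `ζ₁ = uⁱ∂/∂uⁱ + 2u̇ⁱ∂/∂u̇ⁱ` on a function. -/
def zeta1 {n : ℕ} (f : (Fin n → ℝ) × (Fin n → ℝ) × (Fin n → ℝ) → ℝ)
    (q : (Fin n → ℝ) × (Fin n → ℝ) × (Fin n → ℝ)) : ℝ :=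
  fderiv ℝ f q (0, q.2.1, 2 • q.2.2)

/-- The action of the fundamental field `ζ₂ = uⁱ∂/∂u̇ⁱ` on a function. -/
def zeta2 {n : ℕ} (f : (Fin n → ℝ) × (Fin n → ℝ) × (Fin n → ℝ) → ℝ)
    (q : (Fin n → ℝ) × (Fin n → ℝ) × (Fin n → ℝ)) : ℝ :=
  fderiv ℝ f q (0, 0, q.2.1)

/- ### Auxiliary material for `stmt_3` -/

/-- Injection into the first slot. -/
def jinj1 (n : ℕ) : (Fin n → ℝ) →L[ℝ] (Fin n → ℝ) × (Fin n → ℝ) × (Fin n → ℝ) :=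
  ContinuousLinearMap.inl ℝ _ _

/-- Injection into the second slot. -/
def jinj2 (n : ℕ) : (Fin n → ℝ) →L[ℝ] (Fin n → ℝ) × (Fin n → ℝ) × (Fin n → ℝ) :=
  (ContinuousLinearMap.inr ℝ (Fin n → ℝ) _).comp (ContinuousLinearMap.inl ℝ _ _)

/-- Injection into the third slot. -/
def jinj3 (n : ℕ) : (Fin n → ℝ) →L[ℝ] (Fin n → ℝ) × (Fin n → ℝ) × (Fin n → ℝ) :=
  (ContinuousLinearMap.inr ℝ (Fin n → ℝ) _).comp (ContinuousLinearMap.inr ℝ _ _)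

lemma jinj1_apply {n : ℕ} (v : Fin n → ℝ) : jinj1 n v = (v, 0, 0) := rfl
lemma jinj2_apply {n : ℕ} (v : Fin n → ℝ) : jinj2 n v = (0, v, 0) := rfl
lemma jinj3_apply {n : ℕ} (v : Fin n → ℝ) : jinj3 n v = (0, 0, v) := rfl

lemma jinj_split {n : ℕ} (a b c : Fin n → ℝ) :
    ((a, b, c) : (Fin n → ℝ) × (Fin n → ℝ) × (Fin n → ℝ))
      = jinj1 n a + jinj2 n b + jinj3 n c := by
  simp [jinj1_apply, jinj2_apply, jinj3_apply, Prod.ext_iff]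

/-- if a smooth curve satisfies the Euler–Poisson equation
`(d/dt)p = ∂L/∂x` of a smooth second-order Lagrangian `L(x,u,u̇)`, then the Hamilton
function `H = p⁽¹⁾·x'' + p·x' − L` is constant along the curve. -/
theorem stmt_3 (n : ℕ) (hn : 1 ≤ n)
    (L : (Fin n → ℝ) × (Fin n → ℝ) × (Fin n → ℝ) → ℝ)
    (hL : ContDiff ℝ (⊤ : ℕ∞) L)
    (x : ℝ → Fin n → ℝ) (hx : ContDiff ℝ (⊤ : ℕ∞) x)
    (hEP : ∀ t : ℝ,
      deriv (mom0 L x) t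
        = fderiv ℝ (fun y => L (y, deriv x t, deriv (deriv x) t)) (x t)) :
    ∀ t s : ℝ, hamilton L x t = hamilton L x s := by
  classical
  -- smoothness of curve derivatives
  have hx' : ContDiff ℝ (⊤ : ℕ∞) x := hx.of_le (by simp)
  have hx1 : ContDiff ℝ (⊤ : ℕ∞) (deriv x) := (contDiff_infty_iff_deriv.mp hx').2
  have hx2 : ContDiff ℝ (⊤ : ℕ∞) (deriv (deriv x)) := (contDiff_infty_iff_deriv.mp hx1).2
  have hx3 : ContDiff ℝ (⊤ : ℕ∞) (deriv (deriv (deriv x))) :=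
    (contDiff_infty_iff_deriv.mp hx2).2
  have hone : (1 : WithTop ℕ∞) ≤ ((⊤ : ℕ∞) : WithTop ℕ∞) := by exact_mod_cast le_top
  have hdx : ∀ t, HasDerivAt x (deriv x t) t :=
    fun t => (hx'.differentiable (lt_of_lt_of_le zero_lt_one hone).ne' t).hasDerivAt
  have hdx1 : ∀ t, HasDerivAt (deriv x) (deriv (deriv x) t) t :=
    fun t => (hx1.differentiable (lt_of_lt_of_le zero_lt_one hone).ne' t).hasDerivAt
  have hdx2 : ∀ t, HasDerivAt (deriv (deriv x)) (deriv (deriv (deriv x)) t) t :=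
    fun t => (hx2.differentiable (lt_of_lt_of_le zero_lt_one hone).ne' t).hasDerivAt
  -- D : the full differential of L along the curve
  set D : ℝ → ((Fin n → ℝ) × (Fin n → ℝ) × (Fin n → ℝ)) →L[ℝ] ℝ :=
    fun t => fderiv ℝ L (jet2 x t) with hDdef
  have hjet : ContDiff ℝ (⊤ : ℕ∞) (jet2 x) := ContDiff.prodMk hx' (ContDiff.prodMk hx1 hx2)
  have hD : ContDiff ℝ (⊤ : ℕ∞) D := by
    exact (hL.fderiv_right ((by simp))).comp hjet
  have hD1 : ContDiff ℝ (⊤ : ℕ∞) (deriv D) := (contDiff_infty_iff_deriv.mp hD).2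
  have hdD : ∀ t, HasDerivAt D (deriv D t) t :=
    fun t => (hD.differentiable (lt_of_lt_of_le zero_lt_one hone).ne' t).hasDerivAt
  have hdD1 : ∀ t, HasDerivAt (deriv D) (deriv (deriv D) t) t :=
    fun t => (hD1.differentiable (lt_of_lt_of_le zero_lt_one hone).ne' t).hasDerivAt
  have hLd : Differentiable ℝ L := hL.differentiable (by simp)
  -- partial derivatives of L as compositions
  have key3 : ∀ t, mom1 L x t = (D t).comp (jinj3 n) := by
    intro t
    have h1 : HasFDerivAt
        (fun v : Fin n → ℝ => ((x t, deriv x t, v) :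
          (Fin n → ℝ) × (Fin n → ℝ) × (Fin n → ℝ)))
        (jinj3 n) (deriv (deriv x) t) := by
      have := HasFDerivAt.prodMk (hasFDerivAt_const (𝕜 := ℝ) (x t) (deriv (deriv x) t))
        (HasFDerivAt.prodMk (hasFDerivAt_const (𝕜 := ℝ) (deriv x t) (deriv (deriv x) t))
          (hasFDerivAt_id (𝕜 := ℝ) (deriv (deriv x) t)))
      exact this
    have h2 : HasFDerivAt L (D t) (x t, deriv x t, deriv (deriv x) t) :=
      (hLd _).hasFDerivAt
    have hc := HasFDerivAt.comp (𝕜 := ℝ) (deriv (deriv x) t) h2 h1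
    exact hc.fderiv
  have key2 : ∀ t, fderiv ℝ (fun u => L (x t, u, deriv (deriv x) t)) (deriv x t)
      = (D t).comp (jinj2 n) := by
    intro t
    have h1 : HasFDerivAt
        (fun u : Fin n → ℝ => ((x t, u, deriv (deriv x) t) :
          (Fin n → ℝ) × (Fin n → ℝ) × (Fin n → ℝ)))
        (jinj2 n) (deriv x t) := by
      have := HasFDerivAt.prodMk (hasFDerivAt_const (𝕜 := ℝ) (x t) (deriv x t))
        (HasFDerivAt.prodMk (hasFDerivAt_id (𝕜 := ℝ) (deriv x t))
          (hasFDerivAt_const (𝕜 := ℝ) (deriv (deriv x) t) (deriv x t)))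
      exact this
    have h2 : HasFDerivAt L (D t) (x t, deriv x t, deriv (deriv x) t) :=
      (hLd _).hasFDerivAt
    have hc := HasFDerivAt.comp (𝕜 := ℝ) (deriv x t) h2 h1
    exact hc.fderiv
  have key1 : ∀ t, fderiv ℝ (fun y => L (y, deriv x t, deriv (deriv x) t)) (x t)
      = (D t).comp (jinj1 n) := by
    intro t
    have h1 : HasFDerivAt
        (fun y : Fin n → ℝ => ((y, deriv x t, deriv (deriv x) t) :
          (Fin n → ℝ) × (Fin n → ℝ) × (Fin n → ℝ)))
        (jinj1 n) (x t) := by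
      have := HasFDerivAt.prodMk (hasFDerivAt_id (𝕜 := ℝ) (x t))
        (HasFDerivAt.prodMk (hasFDerivAt_const (𝕜 := ℝ) (deriv x t) (x t))
          (hasFDerivAt_const (𝕜 := ℝ) (deriv (deriv x) t) (x t)))
      exact this
    have h2 : HasFDerivAt L (D t) (x t, deriv x t, deriv (deriv x) t) :=
      (hLd _).hasFDerivAt
    have hc := HasFDerivAt.comp (𝕜 := ℝ) (x t) h2 h1
    exact hc.fderiv
  have mom1eq : mom1 L x = fun t => (D t).comp (jinj3 n) := funext key3
  -- derivative of mom1
  have hdmom1 : ∀ t, HasDerivAt (mom1 L x) ((deriv D t).comp (jinj3 n)) t := by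
    intro t
    rw [mom1eq]
    have := (hdD t).clm_comp (hasDerivAt_const t (jinj3 n))
    simpa using this
  have mom0eq : mom0 L x = fun t => (D t).comp (jinj2 n) - (deriv D t).comp (jinj3 n) := by
    funext t
    rw [mom0, key2 t, (hdmom1 t).deriv]
  -- derivative of mom0
  have hdmom0 : ∀ t, HasDerivAt (mom0 L x)
      ((deriv D t).comp (jinj2 n) - (deriv (deriv D) t).comp (jinj3 n)) t := by
    intro t
    rw [mom0eq]
    have h1 := (hdD t).clm_comp (hasDerivAt_const t (jinj2 n))
    have h2 := (hdD1 t).clm_comp (hasDerivAt_const t (jinj3 n))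
    have h3 := h1.sub h2
    simp at h3
    exact h3
  -- Euler–Poisson in clm form
  have hEP' : ∀ t, (deriv D t).comp (jinj2 n) - (deriv (deriv D) t).comp (jinj3 n)
      = (D t).comp (jinj1 n) := by
    intro t
    rw [← (hdmom0 t).deriv, hEP t, key1 t]
  -- derivative of the Hamilton function is zero
  have hH : ∀ t, HasDerivAt (hamilton L x) 0 t := by
    intro t
    have h1 : HasDerivAt (fun s => mom1 L x s (deriv (deriv x) s))
        ((deriv D t).comp (jinj3 n) (deriv (deriv x) t)
          + mom1 L x t (deriv (deriv (deriv x)) t)) t :=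
      (hdmom1 t).clm_apply (hdx2 t)
    have h2 : HasDerivAt (fun s => mom0 L x s (deriv x s))
        (((deriv D t).comp (jinj2 n) - (deriv (deriv D) t).comp (jinj3 n)) (deriv x t)
          + mom0 L x t (deriv (deriv x) t)) t :=
      (hdmom0 t).clm_apply (hdx1 t)
    have hjd : HasDerivAt (jet2 x)
        (deriv x t, deriv (deriv x) t, deriv (deriv (deriv x)) t) t :=
      HasDerivAt.prodMk (hdx t) (HasDerivAt.prodMk (hdx1 t) (hdx2 t))
    have h3 : HasDerivAt (fun s => L (jet2 x s))
        (D t (deriv x t, deriv (deriv x) t, deriv (deriv (deriv x)) t)) t := by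
      have := ((hLd _).hasFDerivAt).comp_hasDerivAt t hjd
      exact this
    have htot := (h1.add h2).sub h3
    have hval : ((deriv D t).comp (jinj3 n) (deriv (deriv x) t)
          + mom1 L x t (deriv (deriv (deriv x)) t))
        + (((deriv D t).comp (jinj2 n) - (deriv (deriv D) t).comp (jinj3 n)) (deriv x t)
          + mom0 L x t (deriv (deriv x) t))
        - D t (deriv x t, deriv (deriv x) t, deriv (deriv (deriv x)) t) = 0 := by
      rw [hEP' t, key3 t, mom0eq,
        jinj_split (deriv x t) (deriv (deriv x) t) (deriv (deriv (deriv x)) t),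
        map_add, map_add]
      simp only [ContinuousLinearMap.comp_apply, ContinuousLinearMap.sub_apply]
      ring
    rw [hval] at htot
    exact htot
  exact fun t s =>
    is_const_of_deriv_eq_zero (fun u => (hH u).differentiableAt)
      (fun u => (hH u).deriv) t s
end
end

section
/- Let n ≥ 1 and let L_I, L_II : ℝⁿ × ℝⁿ × ℝⁿ → ℝ be smooth functions of (x, u, u̇) such that L_II is parameter-independent, i.e. ζ₁L_II = 0 and ζ₂L_II = 0 everywhere, and L_I satisfies the Zermelo conditions ζ₁L_I = L_I and ζ₂L_I = 0 everywhere (so that L_I constitutes a parameter-independent variational problem). Set L = L_II + L_I. Then along every smooth curve x : ℝ → ℝⁿ satisfying the Euler–Poisson equation of L, i.e. (d/dt)p(t) = (∂L/∂x)(j²x(t)) where p(t) = (∂L/∂u)(j²x(t)) − (d/dt)[(∂L/∂u̇)(j²x(t))], the function t ↦ L_II(j²x(t)) is constant. -/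
noncomputable section

namespace Stmt4Aux

variable {n : ℕ}

abbrev E (n : ℕ) := Fin n → ℝ
abbrev P (n : ℕ) := E n × E n × E n

/-- Inclusion `v ↦ (v,0,0)`. -/
def inc1 : E n →L[ℝ] P n :=
  (ContinuousLinearMap.id ℝ (E n)).prod (0 : E n →L[ℝ] E n × E n)

/-- Inclusion `v ↦ (0,v,0)`. -/
def inc2 : E n →L[ℝ] P n :=
  (0 : E n →L[ℝ] E n).prod ((ContinuousLinearMap.id ℝ (E n)).prod (0 : E n →L[ℝ] E n))

/-- Inclusion `v ↦ (0,0,v)`. -/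
def inc3 : E n →L[ℝ] P n :=
  (0 : E n →L[ℝ] E n).prod ((0 : E n →L[ℝ] E n).prod (ContinuousLinearMap.id ℝ (E n)))

@[simp] lemma inc1_apply (v : E n) : (inc1 v : P n) = (v, 0, 0) := rfl
@[simp] lemma inc2_apply (v : E n) : (inc2 v : P n) = (0, v, 0) := rfl
@[simp] lemma inc3_apply (v : E n) : (inc3 v : P n) = (0, 0, v) := rfl

lemma hasFDerivAt_mk1 (a b c : E n) :
    HasFDerivAt (fun v : E n => ((v, a, b) : P n)) inc1 c := by
  have h0 : HasFDerivAt (fun v : E n => ((0, a, b) : P n) + inc1 v) inc1 c :=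
    (inc1.hasFDerivAt).const_add _
  have heq : (fun v : E n => ((0, a, b) : P n) + inc1 v) = fun v : E n => ((v, a, b) : P n) := by
    funext v; simp [Prod.ext_iff]
  rwa [heq] at h0

lemma hasFDerivAt_mk2 (a b c : E n) :
    HasFDerivAt (fun v : E n => ((a, v, b) : P n)) inc2 c := by
  have h0 : HasFDerivAt (fun v : E n => ((a, 0, b) : P n) + inc2 v) inc2 c :=
    (inc2.hasFDerivAt).const_add _
  have heq : (fun v : E n => ((a, 0, b) : P n) + inc2 v) = fun v : E n => ((a, v, b) : P n) := by
    funext v; simp [Prod.ext_iff]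
  rwa [heq] at h0

lemma hasFDerivAt_mk3 (a b c : E n) :
    HasFDerivAt (fun v : E n => ((a, b, v) : P n)) inc3 c := by
  have h0 : HasFDerivAt (fun v : E n => ((a, b, 0) : P n) + inc3 v) inc3 c :=
    (inc3.hasFDerivAt).const_add _
  have heq : (fun v : E n => ((a, b, 0) : P n) + inc3 v) = fun v : E n => ((a, b, v) : P n) := by
    funext v; simp [Prod.ext_iff]
  rwa [heq] at h0

lemma fderiv_partial1 {L : P n → ℝ} {a b c : E n} (hL : DifferentiableAt ℝ L (a, b, c)) :
    fderiv ℝ (fun v => L (v, b, c)) a = (fderiv ℝ L (a, b, c)).comp inc1 :=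
  (hL.hasFDerivAt.comp a (hasFDerivAt_mk1 b c a)).fderiv

lemma fderiv_partial2 {L : P n → ℝ} {a b c : E n} (hL : DifferentiableAt ℝ L (a, b, c)) :
    fderiv ℝ (fun v => L (a, v, c)) b = (fderiv ℝ L (a, b, c)).comp inc2 :=
  (hL.hasFDerivAt.comp b (hasFDerivAt_mk2 a c b)).fderiv

lemma fderiv_partial3 {L : P n → ℝ} {a b c : E n} (hL : DifferentiableAt ℝ L (a, b, c)) :
    fderiv ℝ (fun v => L (a, b, v)) c = (fderiv ℝ L (a, b, c)).comp inc3 :=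
  (hL.hasFDerivAt.comp c (hasFDerivAt_mk3 a b c)).fderiv

/-- Composition with a fixed linear map, as a derivative rule. -/
lemma hasDerivAt_compRight {A : ℝ → (P n →L[ℝ] ℝ)} {A' : P n →L[ℝ] ℝ} {t : ℝ}
    (hA : HasDerivAt A A' t) (ι : E n →L[ℝ] P n) :
    HasDerivAt (fun s => (A s).comp ι) (A'.comp ι) t := by
  have := ((ContinuousLinearMap.compL ℝ (E n) (P n) ℝ).flip ι).hasFDerivAt.comp_hasDerivAt t hA
  exact this

end Stmt4Aux

open Stmt4Aux in
/-- Proposition 2.1 of the paper: if `L_II` is parameter-independent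
(`ζ₁L_II = 0`, `ζ₂L_II = 0`) and `L_I` satisfies the Zermelo conditions
(`ζ₁L_I = L_I`, `ζ₂L_I = 0`), then `L_II` is constant along the extremals of
`L = L_II + L_I`. -/
theorem stmt_4 (n : ℕ) (hn : 1 ≤ n)
    (LII LI : (Fin n → ℝ) × (Fin n → ℝ) × (Fin n → ℝ) → ℝ)
    (hLII : ContDiff ℝ (⊤ : ℕ∞) LII) (hLI : ContDiff ℝ (⊤ : ℕ∞) LI)
    (hparind : ∀ q : (Fin n → ℝ) × (Fin n → ℝ) × (Fin n → ℝ),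
      zeta1 LII q = 0 ∧ zeta2 LII q = 0)
    (hZermelo : ∀ q : (Fin n → ℝ) × (Fin n → ℝ) × (Fin n → ℝ),
      zeta1 LI q = LI q ∧ zeta2 LI q = 0)
    (x : ℝ → Fin n → ℝ) (hx : ContDiff ℝ (⊤ : ℕ∞) x)
    (hEP : ∀ t : ℝ,
      deriv (mom0 (fun q => LII q + LI q) x) t
        = fderiv ℝ (fun y => LII (y, deriv x t, deriv (deriv x) t)
            + LI (y, deriv x t, deriv (deriv x) t)) (x t)) :
    ∀ t s : ℝ, LII (jet2 x t) = LII (jet2 x s) := by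
  classical
  set L : (Fin n → ℝ) × (Fin n → ℝ) × (Fin n → ℝ) → ℝ := fun q => LII q + LI q with hLdef
  have hLII' : ContDiff ℝ ((⊤ : ℕ∞) : WithTop ℕ∞) LII := hLII.of_le (by simp)
  have hLI' : ContDiff ℝ ((⊤ : ℕ∞) : WithTop ℕ∞) LI := hLI.of_le (by simp)
  have hx' : ContDiff ℝ ((⊤ : ℕ∞) : WithTop ℕ∞) x := hx.of_le (by simp)
  have hL : ContDiff ℝ ((⊤ : ℕ∞) : WithTop ℕ∞) L := hLII'.add hLI' 
  set x1 := deriv x with hx1def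
  set x2 := deriv x1 with hx2def
  set x3 := deriv x2 with hx3def
  -- smoothness of the derivatives of x
  have hxc1 : ContDiff ℝ ((⊤ : ℕ∞) : WithTop ℕ∞) x1 := (contDiff_infty_iff_deriv.mp hx').2
  have hxc2 : ContDiff ℝ ((⊤ : ℕ∞) : WithTop ℕ∞) x2 := (contDiff_infty_iff_deriv.mp hxc1).2
  have Hx : ∀ t, HasDerivAt x (x1 t) t := fun t =>
    hasDerivAt_deriv_iff.mpr ((hx'.differentiable (by simp)) t)
  have Hx1 : ∀ t, HasDerivAt x1 (x2 t) t := fun t =>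
    hasDerivAt_deriv_iff.mpr ((hxc1.differentiable (by simp)) t)
  have Hx2 : ∀ t, HasDerivAt x2 (x3 t) t := fun t =>
    hasDerivAt_deriv_iff.mpr ((hxc2.differentiable (by simp)) t)
  -- the second jet curve and the total derivative along it
  have hjet : ContDiff ℝ ((⊤ : ℕ∞) : WithTop ℕ∞) (jet2 x) := hx'.prodMk (hxc1.prodMk hxc2)
  have Hjet : ∀ t, HasDerivAt (jet2 x) ((x1 t, x2 t, x3 t) : P n) t := fun t =>
    (Hx t).prodMk ((Hx1 t).prodMk (Hx2 t))
  set A := fun t => fderiv ℝ L (jet2 x t) with hAdef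
  have hAc : ContDiff ℝ ((⊤ : ℕ∞) : WithTop ℕ∞) A := (hL.fderiv_right (le_refl _)).comp hjet
  set A' := deriv A with hA'def
  have hA'c : ContDiff ℝ ((⊤ : ℕ∞) : WithTop ℕ∞) A' := (contDiff_infty_iff_deriv.mp hAc).2
  set A'' := deriv A' with hA''def
  have HA : ∀ t, HasDerivAt A (A' t) t := fun t =>
    hasDerivAt_deriv_iff.mpr ((hAc.differentiable (by simp)) t)
  have HA' : ∀ t, HasDerivAt A' (A'' t) t := fun t =>
    hasDerivAt_deriv_iff.mpr ((hA'c.differentiable (by simp)) t)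
  have hLd : ∀ q : P n, DifferentiableAt ℝ L q := fun q => (hL.differentiable (by simp)) q
  -- identify mom1 and its derivative
  have hmom1 : mom1 L x = fun t => (A t).comp inc3 := by
    funext t
    exact fderiv_partial3 (hLd (jet2 x t))
  have hdmom1 : deriv (mom1 L x) = fun t => (A' t).comp inc3 := by
    rw [hmom1]
    funext t
    exact (hasDerivAt_compRight (HA t) inc3).deriv
  -- identify mom0 and its derivative
  have hmom0 : mom0 L x = fun t => (A t).comp inc2 - (A' t).comp inc3 := by
    funext t
    show fderiv ℝ (fun u => L (x t, u, x2 t)) (x1 t) - deriv (mom1 L x) t = _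
    rw [hdmom1, fderiv_partial2 (hLd (jet2 x t))]
    rfl
  -- Euler–Poisson in concentrated form
  have hEP' : ∀ t, (A' t).comp inc2 - (A'' t).comp inc3 = (A t).comp inc1 := by
    intro t
    have hd : HasDerivAt (mom0 L x) ((A' t).comp inc2 - (A'' t).comp inc3) t := by
      rw [hmom0]
      exact (hasDerivAt_compRight (HA t) inc2).sub (hasDerivAt_compRight (HA' t) inc3)
    have h1 := hd.deriv
    rw [hEP t] at h1
    rw [← h1]
    exact fderiv_partial1 (hLd (jet2 x t))
  -- fderiv of the sum
  have hfd : ∀ t, A t = fderiv ℝ LII (jet2 x t) + fderiv ℝ LI (jet2 x t) := fun t =>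
    fderiv_fun_add ((hLII'.differentiable (by simp)) _) ((hLI'.differentiable (by simp)) _)
  -- zeta2 condition along the curve
  have hz2 : ∀ t, A t ((0 : E n), (0 : E n), x1 t) = 0 := by
    intro t
    have h2II := (hparind (jet2 x t)).2
    have h2I := (hZermelo (jet2 x t)).2
    unfold zeta2 at h2II h2I
    rw [hfd t]
    simpa using by
      have : ((jet2 x t).2.1 : E n) = x1 t := rfl
      rw [this] at h2II h2I
      simp [ContinuousLinearMap.add_apply, h2II, h2I]
  -- zeta1 condition along the curve
  have hz1 : ∀ t,
      A t ((0 : E n), x1 t, (0 : E n)) + A t (0, 0, x2 t) + A t (0, 0, x2 t)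
        = LI (jet2 x t) := by
    intro t
    have h1II := (hparind (jet2 x t)).1
    have h1I := (hZermelo (jet2 x t)).1
    unfold zeta1 at h1II h1I
    have hq1 : ((jet2 x t).2.1 : E n) = x1 t := rfl
    have hq2 : ((jet2 x t).2.2 : E n) = x2 t := rfl
    rw [hq1, hq2] at h1II h1I
    have hsplit : ((0 : E n), x1 t, (2 : ℕ) • x2 t)
        = ((0 : E n), x1 t, (0 : E n)) + (0, 0, x2 t) + (0, 0, x2 t) := by
      simp [Prod.ext_iff, two_smul]
    rw [hfd t]
    have e1 : fderiv ℝ LII (jet2 x t) ((0 : E n), x1 t, (0:E n))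
        + fderiv ℝ LII (jet2 x t) (0, 0, x2 t) + fderiv ℝ LII (jet2 x t) (0, 0, x2 t) = 0 := by
      rw [← map_add, ← map_add, ← hsplit]; exact h1II
    have e2 : fderiv ℝ LI (jet2 x t) ((0 : E n), x1 t, (0:E n))
        + fderiv ℝ LI (jet2 x t) (0, 0, x2 t) + fderiv ℝ LI (jet2 x t) (0, 0, x2 t)
        = LI (jet2 x t) := by
      rw [← map_add, ← map_add, ← hsplit]; exact h1I
    simp only [ContinuousLinearMap.add_apply]
    linarith
  -- derivative of the zeta2 identity
  have hi : ∀ t, A' t ((0 : E n), (0 : E n), x1 t) + A t ((0:E n), (0:E n), x2 t) = 0 := by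
    intro t
    have hd : HasDerivAt (fun s => A s ((0 : E n), (0 : E n), x1 s))
        (A' t ((0:E n), (0:E n), x1 t) + A t ((0:E n), (0:E n), x2 t)) t := by
      have hu : HasDerivAt (fun s => (((0 : E n), (0 : E n), x1 s) : P n))
          (((0 : E n), (0 : E n), x2 t) : P n) t :=
        (hasDerivAt_const t _).prodMk ((hasDerivAt_const t _).prodMk (Hx1 t))
      exact (HA t).clm_apply hu
    have hzfun : (fun s => A s ((0 : E n), (0 : E n), x1 s)) = fun _ => (0 : ℝ) :=
      funext hz2
    rw [hzfun] at hd
    exact hd.unique (hasDerivAt_const t 0)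
  -- pointwise identification of L_II with the (negative of) the Hamiltonian
  have hGF : ∀ t, LII (jet2 x t)
      = L (jet2 x t) - A t ((0:E n), (0:E n), x2 t) - A t ((0:E n), x1 t, (0:E n))
        + A' t ((0:E n), (0:E n), x1 t) := by
    intro t
    have h1 := hz1 t
    have h2 := hi t
    have h3 : L (jet2 x t) = LII (jet2 x t) + LI (jet2 x t) := rfl
    linarith
  -- the right-hand side has derivative zero
  have hF : ∀ t, HasDerivAt
      (fun s => L (jet2 x s) - A s ((0:E n), (0:E n), x2 s) - A s ((0:E n), x1 s, (0:E n))
        + A' s ((0:E n), (0:E n), x1 s)) 0 t := by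
    intro t
    have h1 : HasDerivAt (fun s => L (jet2 x s)) (A t ((x1 t, x2 t, x3 t) : P n)) t :=
      (hLd (jet2 x t)).hasFDerivAt.comp_hasDerivAt t (Hjet t)
    have h2 : HasDerivAt (fun s => A s ((0:E n), (0:E n), x2 s))
        (A' t ((0:E n), (0:E n), x2 t) + A t ((0:E n), (0:E n), x3 t)) t :=
      (HA t).clm_apply ((hasDerivAt_const t _).prodMk ((hasDerivAt_const t _).prodMk (Hx2 t)))
    have h3 : HasDerivAt (fun s => A s ((0:E n), x1 s, (0:E n)))
        (A' t ((0:E n), x1 t, (0:E n)) + A t ((0:E n), x2 t, (0:E n))) t :=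
      (HA t).clm_apply ((hasDerivAt_const t _).prodMk ((Hx1 t).prodMk (hasDerivAt_const t _)))
    have h4 : HasDerivAt (fun s => A' s ((0:E n), (0:E n), x1 s))
        (A'' t ((0:E n), (0:E n), x1 t) + A' t ((0:E n), (0:E n), x2 t)) t :=
      (HA' t).clm_apply ((hasDerivAt_const t _).prodMk ((hasDerivAt_const t _).prodMk (Hx1 t)))
    have hsum := ((h1.sub h2).sub h3).add h4
    have key := DFunLike.congr_fun (hEP' t) (x1 t)
    simp only [ContinuousLinearMap.sub_apply, ContinuousLinearMap.comp_apply,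
      inc1_apply, inc2_apply, inc3_apply] at key
    have hsplit : A t ((x1 t, x2 t, x3 t) : P n)
        = A t ((x1 t, (0:E n), (0:E n)) : P n) + A t ((0:E n), x2 t, (0:E n))
          + A t ((0:E n), (0:E n), x3 t) := by
      rw [← map_add, ← map_add]
      congr 1
      simp [Prod.ext_iff]
    convert hsum using 1
    · rfl
    · rfl
    · rfl
    · linarith
  -- conclude
  have hG : ∀ t, HasDerivAt (fun s => LII (jet2 x s)) 0 t := by
    intro t
    have heq : (fun s => L (jet2 x s) - A s ((0:E n), (0:E n), x2 s)
        - A s ((0:E n), x1 s, (0:E n)) + A' s ((0:E n), (0:E n), x1 s))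
        = fun s => LII (jet2 x s) := funext fun s => (hGF s).symm
    have := hF t
    rwa [heq] at this
  intro t s
  exact is_const_of_deriv_eq_zero (fun u => (hG u).differentiableAt)
    (fun u => (hG u).deriv) t s
end
end

section
/- On ℝ² define the Lagrangian L(x, u, u̇) = (ε_{ij} uⁱ u̇ʲ)/|u|³ − m|u| for u ≠ 0, where ε is the standard Levi-Civita symbol (ε₁₂ = 1 = −ε₂₁, ε₁₁ = ε₂₂ = 0), |·| is the Euclidean norm, and m ∈ ℝ. Then there is a sign ς ∈ {1, −1}, independent of the curve, such that for every smooth curve x : ℝ → ℝ² with x'(t) ≠ 0 for all t, the Euler–Poisson expression of L along x, namely (∂L/∂xᵢ)(j²x(t)) − (d/dt)(∂L/∂uᵢ)(j²x(t)) + (d²/dt²)(∂L/∂u̇ᵢ)(j²x(t)), equals ς·Eᵢ(x(t), x'(t), x''(t), x'''(t)), where Eᵢ(x, u, u̇, ü) = ε_{ij}üʲ/|u|³ − 3((u̇·u)/|u|⁵)ε_{ij}u̇ʲ + m(|u|²u̇ᵢ − (u̇·u)uᵢ)/|u|³. -/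
noncomputable section

/-- The Euclidean dot product on `ℝ²`. -/
def dot2 (a b : Fin 2 → ℝ) : ℝ := a 0 * b 0 + a 1 * b 1

/-- The Euclidean norm on `ℝ²`. -/
def nrm2 (a : Fin 2 → ℝ) : ℝ := Real.sqrt (dot2 a a)

/-- `ε_{ij}aⁱbʲ` with `ε₁₂ = 1` (indices running over `{0,1}`). -/
def eps2 (a b : Fin 2 → ℝ) : ℝ := a 0 * b 1 - a 1 * b 0

/-- The covector `(εb)ᵢ = ε_{ij}bʲ`. -/
def epsRow (i : Fin 2) (b : Fin 2 → ℝ) : ℝ := if i = 0 then b 1 else -b 0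

/-- The `i`-th component of the Euler–Poisson expression
`∂L/∂xᵢ − (d/dt)(∂L/∂uᵢ) + (d²/dt²)(∂L/∂u̇ᵢ)` of a second-order Lagrangian
`L(x,u,u̇)` along the curve `x`, evaluated at time `t`. -/
def eulerPoisson (L : (Fin 2 → ℝ) × (Fin 2 → ℝ) × (Fin 2 → ℝ) → ℝ)
    (x : ℝ → Fin 2 → ℝ) (i : Fin 2) (t : ℝ) : ℝ :=
  fderiv ℝ L (x t, deriv x t, deriv (deriv x) t) (Pi.single i 1, 0, 0)
    - deriv (fun s =>
        fderiv ℝ L (x s, deriv x s, deriv (deriv x) s) (0, Pi.single i 1, 0)) t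
    + deriv (deriv (fun s =>
        fderiv ℝ L (x s, deriv x s, deriv (deriv x) s) (0, 0, Pi.single i 1))) t

/-- The expression
`Eᵢ(x,u,u̇,ü) = ε_{ij}üʲ/|u|³ − 3((u̇·u)/|u|⁵)ε_{ij}u̇ʲ + m(|u|²u̇ᵢ − (u̇·u)uᵢ)/|u|³`. -/
def eTarget (m : ℝ) (i : Fin 2) (u v a : Fin 2 → ℝ) : ℝ :=
  epsRow i a / nrm2 u ^ 3 - 3 * (dot2 v u / nrm2 u ^ 5) * epsRow i v
    + m * (nrm2 u ^ 2 * v i - dot2 v u * u i) / nrm2 u ^ 3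

lemma dot2_pos {w : Fin 2 → ℝ} (h : w ≠ 0) : 0 < dot2 w w := by
  have h0 : w 0 ≠ 0 ∨ w 1 ≠ 0 := by
    by_contra hc
    push_neg at hc
    exact h (funext fun j => by fin_cases j <;> simp [hc.1, hc.2])
  unfold dot2
  rcases h0 with h0 | h0 <;>
    nlinarith [mul_self_pos.mpr h0, mul_self_nonneg (w 0), mul_self_nonneg (w 1)]

lemma nrm2_pos {w : Fin 2 → ℝ} (h : w ≠ 0) : 0 < nrm2 w := Real.sqrt_pos.mpr (dot2_pos h)

lemma nrm2_sq {w : Fin 2 → ℝ} : nrm2 w ^ 2 = dot2 w w := by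
  have : 0 ≤ dot2 w w := by unfold dot2; nlinarith [mul_self_nonneg (w 0), mul_self_nonneg (w 1)]
  simpa [nrm2] using Real.sq_sqrt this

section helpers
variable {f g : ℝ → Fin 2 → ℝ} {f' g' : Fin 2 → ℝ} {t : ℝ}

lemma hasDerivAt_eps2' (hf : ∀ j, HasDerivAt (fun s => f s j) (f' j) t)
    (hg : ∀ j, HasDerivAt (fun s => g s j) (g' j) t) :
    HasDerivAt (fun s => eps2 (f s) (g s)) (eps2 f' (g t) + eps2 (f t) g') t := by
  have h := ((hf 0).mul (hg 1)).sub ((hf 1).mul (hg 0))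
  refine h.congr_deriv ?_
  simp [eps2]; ring

lemma hasDerivAt_dot2' (hf : ∀ j, HasDerivAt (fun s => f s j) (f' j) t)
    (hg : ∀ j, HasDerivAt (fun s => g s j) (g' j) t) :
    HasDerivAt (fun s => dot2 (f s) (g s)) (dot2 f' (g t) + dot2 (f t) g') t := by
  have h := ((hf 0).mul (hg 0)).add ((hf 1).mul (hg 1))
  refine h.congr_deriv ?_
  simp [dot2]; ring

lemma hasDerivAt_epsRow' (i : Fin 2) (hf : ∀ j, HasDerivAt (fun s => f s j) (f' j) t) :
    HasDerivAt (fun s => epsRow i (f s)) (epsRow i f') t := by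
  unfold epsRow
  by_cases hi : i = 0
  · simpa [hi] using hf 1
  · simp [hi]; exact (hf 0).neg

lemma hasDerivAt_nrm2' (hf : ∀ j, HasDerivAt (fun s => f s j) (f' j) t) (hft : f t ≠ 0) :
    HasDerivAt (fun s => nrm2 (f s)) (dot2 f' (f t) / nrm2 (f t)) t := by
  have hS : HasDerivAt (fun s => f s 0 * f s 0 + f s 1 * f s 1)
      (f' 0 * f t 0 + f t 0 * f' 0 + (f' 1 * f t 1 + f t 1 * f' 1)) t :=
    ((hf 0).mul (hf 0)).add ((hf 1).mul (hf 1))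
  have hS0 : f t 0 * f t 0 + f t 1 * f t 1 ≠ 0 := by
    have := dot2_pos hft; unfold dot2 at this; linarith
  have h := hS.sqrt hS0
  have hn := nrm2_pos hft
  refine h.congr_deriv ?_
  have : Real.sqrt (f t 0 * f t 0 + f t 1 * f t 1) = nrm2 (f t) := rfl
  rw [this]
  unfold dot2
  field_simp
  ring
end helpers

abbrev Pt := (Fin 2 → ℝ) × (Fin 2 → ℝ) × (Fin 2 → ℝ)

lemma fderiv_L_apply (m : ℝ) (q : Pt) (h : q.2.1 ≠ 0) (d : Pt) :
    fderiv ℝ (fun q : Pt => eps2 q.2.1 q.2.2 / nrm2 q.2.1 ^ 3 - m * nrm2 q.2.1) q d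
      = (eps2 d.2.1 q.2.2 + eps2 q.2.1 d.2.2) / nrm2 q.2.1 ^ 3
        - 3 * dot2 d.2.1 q.2.1 * eps2 q.2.1 q.2.2 / nrm2 q.2.1 ^ 5
        - m * dot2 d.2.1 q.2.1 / nrm2 q.2.1 := by
  have hn := nrm2_pos h
  have hs := dot2_pos h
  have hu : ∀ j : Fin 2, HasFDerivAt (fun q : Pt => q.2.1 j)
      ((ContinuousLinearMap.proj j).comp
        ((ContinuousLinearMap.fst ℝ (Fin 2 → ℝ) (Fin 2 → ℝ)).comp
          (ContinuousLinearMap.snd ℝ (Fin 2 → ℝ) ((Fin 2 → ℝ) × (Fin 2 → ℝ))))) q :=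
    fun j => by exact ((ContinuousLinearMap.proj j).comp
        ((ContinuousLinearMap.fst ℝ (Fin 2 → ℝ) (Fin 2 → ℝ)).comp
          (ContinuousLinearMap.snd ℝ (Fin 2 → ℝ) ((Fin 2 → ℝ) × (Fin 2 → ℝ))))).hasFDerivAt
  have hv : ∀ j : Fin 2, HasFDerivAt (fun q : Pt => q.2.2 j)
      ((ContinuousLinearMap.proj j).comp
        ((ContinuousLinearMap.snd ℝ (Fin 2 → ℝ) (Fin 2 → ℝ)).comp
          (ContinuousLinearMap.snd ℝ (Fin 2 → ℝ) ((Fin 2 → ℝ) × (Fin 2 → ℝ))))) q :=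
    fun j => by exact ((ContinuousLinearMap.proj j).comp
        ((ContinuousLinearMap.snd ℝ (Fin 2 → ℝ) (Fin 2 → ℝ)).comp
          (ContinuousLinearMap.snd ℝ (Fin 2 → ℝ) ((Fin 2 → ℝ) × (Fin 2 → ℝ))))).hasFDerivAt
  have hS : HasFDerivAt (fun q : Pt => q.2.1 0 * q.2.1 0 + q.2.1 1 * q.2.1 1) _ q :=
    ((hu 0).mul (hu 0)).add ((hu 1).mul (hu 1))
  have hSpos : 0 < q.2.1 0 * q.2.1 0 + q.2.1 1 * q.2.1 1 := by
    have := dot2_pos h; unfold dot2 at this; linarith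
  have hS0 : q.2.1 0 * q.2.1 0 + q.2.1 1 * q.2.1 1 ≠ 0 := hSpos.ne'
  have hN : HasFDerivAt (fun q : Pt => Real.sqrt (q.2.1 0 * q.2.1 0 + q.2.1 1 * q.2.1 1)) _ q :=
    hS.sqrt hS0
  have hE : HasFDerivAt (fun q : Pt => q.2.1 0 * q.2.2 1 - q.2.1 1 * q.2.2 0) _ q :=
    ((hu 0).mul (hv 1)).sub ((hu 1).mul (hv 0))
  have hN3 : HasFDerivAt
      (fun q : Pt => Real.sqrt (q.2.1 0 * q.2.1 0 + q.2.1 1 * q.2.1 1) ^ 3) _ q :=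
    (hasDerivAt_pow 3 _).comp_hasFDerivAt q hN
  have hN3ne : Real.sqrt (q.2.1 0 * q.2.1 0 + q.2.1 1 * q.2.1 1) ^ 3 ≠ 0 :=
    pow_ne_zero 3 (Real.sqrt_pos.mpr hSpos).ne'
  have hN3inv : HasFDerivAt
      (fun q : Pt => (Real.sqrt (q.2.1 0 * q.2.1 0 + q.2.1 1 * q.2.1 1) ^ 3)⁻¹) _ q :=
    (hasDerivAt_inv hN3ne).comp_hasFDerivAt q hN3
  have hL := (hE.mul hN3inv).sub (hN.const_mul m)
  simp only [eps2, nrm2, dot2, div_eq_mul_inv]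
  erw [hL.fderiv]
  have hq : Real.sqrt (q.2.1 0 * q.2.1 0 + q.2.1 1 * q.2.1 1) = nrm2 q.2.1 := rfl
  simp only [ContinuousLinearMap.sub_apply, ContinuousLinearMap.add_apply,
    ContinuousLinearMap.smul_apply, ContinuousLinearMap.comp_apply,
    ContinuousLinearMap.coe_fst', ContinuousLinearMap.coe_snd', ContinuousLinearMap.proj_apply,
    smul_eq_mul, hq]
  push_cast
  field_simp [hn.ne']
  ring


set_option maxHeartbeats 2000000 in
/-- for the Lagrangian `L = ε_{ij}uⁱu̇ʲ/|u|³ − m|u|` on `ℝ²` there is a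
curve-independent sign `ς ∈ {1,−1}` such that along every smooth curve with
nonvanishing velocity the Euler–Poisson expression of `L` equals `ς·Eᵢ`. -/
theorem stmt_7 (m : ℝ) :
    ∃ ς : ℝ, (ς = 1 ∨ ς = -1) ∧
      ∀ x : ℝ → Fin 2 → ℝ, ContDiff ℝ (⊤ : ℕ∞) x → (∀ t : ℝ, deriv x t ≠ 0) →
        ∀ (i : Fin 2) (t : ℝ),
          eulerPoisson
            (fun q => eps2 q.2.1 q.2.2 / nrm2 q.2.1 ^ 3 - m * nrm2 q.2.1) x i t
            = ς * eTarget m i (deriv x t) (deriv (deriv x) t)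
                (deriv (deriv (deriv x)) t) := by
  refine ⟨1, Or.inl rfl, ?_⟩
  intro x hx hne i t
  have hx0 : ContDiff ℝ ((⊤ : ℕ∞) : WithTop ℕ∞) x := hx.of_le (by simp)
  have hx1 : ContDiff ℝ ((⊤ : ℕ∞) : WithTop ℕ∞) (deriv x) := (contDiff_infty_iff_deriv.mp hx0).2
  have hx2 : ContDiff ℝ ((⊤ : ℕ∞) : WithTop ℕ∞) (deriv (deriv x)) :=
    (contDiff_infty_iff_deriv.mp hx1).2
  have hU : ∀ (s : ℝ) (j : Fin 2),
      HasDerivAt (fun r => deriv x r j) (deriv (deriv x) s j) s := fun s j =>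
    hasDerivAt_pi.mp ((hx1.differentiable (by simp) s).hasDerivAt) j
  have hV : ∀ (s : ℝ) (j : Fin 2),
      HasDerivAt (fun r => deriv (deriv x) r j) (deriv (deriv (deriv x)) s j) s := fun s j =>
    hasDerivAt_pi.mp ((hx2.differentiable (by simp) s).hasDerivAt) j
  have hNpos : ∀ s : ℝ, 0 < nrm2 (deriv x s) := fun s => nrm2_pos (hne s)
  have hN : ∀ s : ℝ, HasDerivAt (fun r => nrm2 (deriv x r))
      (dot2 (deriv (deriv x) s) (deriv x s) / nrm2 (deriv x s)) s := fun s =>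
    hasDerivAt_nrm2' (hU s) (hne s)
  -- the first fderiv term vanishes
  have hA : fderiv ℝ (fun q : Pt => eps2 q.2.1 q.2.2 / nrm2 q.2.1 ^ 3 - m * nrm2 q.2.1)
      (x t, deriv x t, deriv (deriv x) t) (Pi.single i 1, 0, 0) = 0 := by
    rw [fderiv_L_apply m (x t, deriv x t, deriv (deriv x) t) (hne t)]
    simp [eps2, dot2]
  -- the ∂L/∂u function along the curve
  have hBfun : (fun s =>
      fderiv ℝ (fun q : Pt => eps2 q.2.1 q.2.2 / nrm2 q.2.1 ^ 3 - m * nrm2 q.2.1)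
        (x s, deriv x s, deriv (deriv x) s) (0, Pi.single i 1, 0))
      = fun s => epsRow i (deriv (deriv x) s) / nrm2 (deriv x s) ^ 3
          - 3 * eps2 (deriv x s) (deriv (deriv x) s) * deriv x s i / nrm2 (deriv x s) ^ 5
          - m * deriv x s i / nrm2 (deriv x s) := by
    funext s
    rw [fderiv_L_apply m (x s, deriv x s, deriv (deriv x) s) (hne s)]
    fin_cases i <;>
      simp [eps2, dot2, epsRow, Pi.single_apply] <;> ring
  -- the ∂L/∂u̇ function along the curve
  have hCfun : (fun s =>
      fderiv ℝ (fun q : Pt => eps2 q.2.1 q.2.2 / nrm2 q.2.1 ^ 3 - m * nrm2 q.2.1)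
        (x s, deriv x s, deriv (deriv x) s) (0, 0, Pi.single i 1))
      = fun s => -epsRow i (deriv x s) / nrm2 (deriv x s) ^ 3 := by
    funext s
    rw [fderiv_L_apply m (x s, deriv x s, deriv (deriv x) s) (hne s)]
    fin_cases i <;>
      simp [eps2, dot2, epsRow, Pi.single_apply] <;> ring
  -- nonvanishing facts
  have hnet : ∀ s : ℝ, nrm2 (deriv x s) ≠ 0 := fun s => (hNpos s).ne'
  have hne3 : ∀ s : ℝ, nrm2 (deriv x s) ^ 3 ≠ 0 := fun s => pow_ne_zero 3 (hnet s)
  have hne5 : ∀ s : ℝ, nrm2 (deriv x s) ^ 5 ≠ 0 := fun s => pow_ne_zero 5 (hnet s)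
  -- derivative of the C-function, at every time s
  have hC1 : ∀ s : ℝ, HasDerivAt
      (fun r => -epsRow i (deriv x r) / nrm2 (deriv x r) ^ 3)
      (-epsRow i (deriv (deriv x) s) / nrm2 (deriv x s) ^ 3
        + 3 * dot2 (deriv (deriv x) s) (deriv x s) * epsRow i (deriv x s)
            / nrm2 (deriv x s) ^ 5) s := by
    intro s
    have h := ((hasDerivAt_epsRow' i (hU s)).neg.div ((hN s).pow 3) (hne3 s))
    simp only [Pi.pow_apply, Pi.neg_apply, Pi.mul_apply, Pi.add_apply, Pi.sub_apply, Pi.div_apply] at h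
    refine h.congr_deriv ?_
    have h2 := hnet s
    field_simp
    ring
  -- second derivative of the C-function at t
  have hC2 : HasDerivAt
      (fun s => -epsRow i (deriv (deriv x) s) / nrm2 (deriv x s) ^ 3
        + 3 * dot2 (deriv (deriv x) s) (deriv x s) * epsRow i (deriv x s)
            / nrm2 (deriv x s) ^ 5)
      (-epsRow i (deriv (deriv (deriv x)) t) / nrm2 (deriv x t) ^ 3
        + 6 * dot2 (deriv (deriv x) t) (deriv x t) * epsRow i (deriv (deriv x) t)
            / nrm2 (deriv x t) ^ 5
        + 3 * (dot2 (deriv (deriv (deriv x)) t) (deriv x t)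
              + dot2 (deriv (deriv x) t) (deriv (deriv x) t)) * epsRow i (deriv x t)
            / nrm2 (deriv x t) ^ 5
        - 15 * dot2 (deriv (deriv x) t) (deriv x t) ^ 2 * epsRow i (deriv x t)
            / nrm2 (deriv x t) ^ 7) t := by
    have h := (((hasDerivAt_epsRow' i (hV t)).neg.div ((hN t).pow 3) (hne3 t))).add
      ((((hasDerivAt_dot2' (hV t) (hU t)).const_mul 3).mul
        (hasDerivAt_epsRow' i (hU t))).div ((hN t).pow 5) (hne5 t))
    simp only [Pi.pow_apply, Pi.neg_apply, Pi.mul_apply, Pi.add_apply, Pi.sub_apply, Pi.div_apply] at h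
    refine h.congr_deriv ?_
    have h2 := hnet t
    simp only [eps2, dot2]
    field_simp
    ring
  -- derivative of the B-function at t
  have hB : HasDerivAt
      (fun s => epsRow i (deriv (deriv x) s) / nrm2 (deriv x s) ^ 3
          - 3 * eps2 (deriv x s) (deriv (deriv x) s) * deriv x s i / nrm2 (deriv x s) ^ 5
          - m * deriv x s i / nrm2 (deriv x s))
      (epsRow i (deriv (deriv (deriv x)) t) / nrm2 (deriv x t) ^ 3
        - 3 * dot2 (deriv (deriv x) t) (deriv x t) * epsRow i (deriv (deriv x) t)
            / nrm2 (deriv x t) ^ 5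
        - 3 * eps2 (deriv x t) (deriv (deriv x) t) * deriv (deriv x) t i
            / nrm2 (deriv x t) ^ 5
        - 3 * eps2 (deriv x t) (deriv (deriv (deriv x)) t) * deriv x t i
            / nrm2 (deriv x t) ^ 5
        + 15 * dot2 (deriv (deriv x) t) (deriv x t) * eps2 (deriv x t) (deriv (deriv x) t)
            * deriv x t i / nrm2 (deriv x t) ^ 7
        - m * deriv (deriv x) t i / nrm2 (deriv x t)
        + m * dot2 (deriv (deriv x) t) (deriv x t) * deriv x t i
            / nrm2 (deriv x t) ^ 3) t := by
    have h := (((hasDerivAt_epsRow' i (hV t)).div ((hN t).pow 3) (hne3 t)).sub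
        ((((hasDerivAt_eps2' (hU t) (hV t)).const_mul 3).mul (hU t i)).div
          ((hN t).pow 5) (hne5 t))).sub
      (((hU t i).const_mul m).div (hN t) (hnet t))
    simp only [Pi.pow_apply, Pi.neg_apply, Pi.mul_apply, Pi.add_apply, Pi.sub_apply, Pi.div_apply] at h
    refine h.congr_deriv ?_
    have h2 := hnet t
    simp only [eps2, dot2]
    field_simp
    ring
  -- assemble
  show fderiv ℝ (fun q : Pt => eps2 q.2.1 q.2.2 / nrm2 q.2.1 ^ 3 - m * nrm2 q.2.1)
        (x t, deriv x t, deriv (deriv x) t) (Pi.single i 1, 0, 0)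
      - deriv (fun s => fderiv ℝ (fun q : Pt => eps2 q.2.1 q.2.2 / nrm2 q.2.1 ^ 3 - m * nrm2 q.2.1)
          (x s, deriv x s, deriv (deriv x) s) (0, Pi.single i 1, 0)) t
      + deriv (deriv (fun s => fderiv ℝ (fun q : Pt => eps2 q.2.1 q.2.2 / nrm2 q.2.1 ^ 3 - m * nrm2 q.2.1)
          (x s, deriv x s, deriv (deriv x) s) (0, 0, Pi.single i 1))) t
      = 1 * eTarget m i (deriv x t) (deriv (deriv x) t) (deriv (deriv (deriv x)) t)
  rw [hA, hBfun, hCfun]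
  rw [hB.deriv]
  rw [show deriv (fun s => -epsRow i (deriv x s) / nrm2 (deriv x s) ^ 3)
      = fun s => -epsRow i (deriv (deriv x) s) / nrm2 (deriv x s) ^ 3
        + 3 * dot2 (deriv (deriv x) s) (deriv x s) * epsRow i (deriv x s)
            / nrm2 (deriv x s) ^ 5 from funext fun s => (hC1 s).deriv]
  rw [hC2.deriv]
  -- final algebraic identity
  unfold eTarget
  have h2 : nrm2 (deriv x t) ^ 2 = dot2 (deriv x t) (deriv x t) := nrm2_sq
  have h3 : nrm2 (deriv x t) ^ 3 = dot2 (deriv x t) (deriv x t) * nrm2 (deriv x t) := by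
    rw [← h2]; ring
  have h5 : nrm2 (deriv x t) ^ 5 = dot2 (deriv x t) (deriv x t) ^ 2 * nrm2 (deriv x t) := by
    rw [← h2]; ring
  have h7 : nrm2 (deriv x t) ^ 7 = dot2 (deriv x t) (deriv x t) ^ 3 * nrm2 (deriv x t) := by
    rw [← h2]; ring
  have hs0 : dot2 (deriv x t) (deriv x t) ≠ 0 := (dot2_pos (hne t)).ne'
  have hn0 := hnet t
  have hs0' : deriv x t 0 * deriv x t 0 + deriv x t 1 * deriv x t 1 ≠ 0 := by
    have h := dot2_pos (hne t); unfold dot2 at h; exact h.ne'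
  have hs2 : deriv x t 0 ^ 2 + deriv x t 1 ^ 2 ≠ 0 := by rw [sq, sq]; exact hs0'
  simp only [h3, h5, h7, h2]
  fin_cases i <;>
    · simp only [eps2, dot2, epsRow, Fin.isValue]
      norm_num
      field_simp [hs0', hn0, hs2]
      ring
end
end
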